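/- arXiv:1806.06810 — 2 statements merged into one kernel-verified Lean document; each statement's English description precedes it below -/
import Mathlib

section
/- Let H be a finite group of unimodular d×d matrices, M a dilation matrix appropriate for H, and c an appropriate center. The map sending (E, ⟨s⟩) to E⟨s⟩ := {EMβ + Es + c − Ec : β ∈ Z^d} defines a group action of H on the set of cosets D = Z^d / M Z^d; in particular E⟨s⟩ is again a coset of M Z^d in Z^d. -/
open Matrix BigOperators

def matR {d : ℕ} (A : Matrix (Fin d) (Fin d) ℤ) : Matrix (Fin d) (Fin d) ℝ :=
  A.map Int.cast

def intc {d : ℕ} (k : Fin d → ℤ) : Fin d → ℝ := fun i => (k i : ℝ)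

/-- The coset `⟨q⟩ = Mℤ^d + q` viewed inside `ℝ^d`. -/
def coset {d : ℕ} (M : Matrix (Fin d) (Fin d) ℤ) (q : Fin d → ℤ) : Set (Fin d → ℝ) :=
  {x | ∃ β : Fin d → ℤ, x = intc (M.mulVec β + q)}

/-- The action `E⟨s⟩ = {EMβ + Es + c − Ec : β ∈ ℤ^d}`. -/
def actC {d : ℕ} (M E : Matrix (Fin d) (Fin d) ℤ) (c : Fin d → ℝ)
    (s : Fin d → ℤ) : Set (Fin d → ℝ) :=
  {x | ∃ β : Fin d → ℤ, x = (matR E).mulVec (intc (M.mulVec β + s)) + c - (matR E).mulVec c}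

/-! If `E M = M E'` with `E'` invertible over `ℤ` and `c - E c = z ∈ ℤ^d`, then
`E⟨s⟩ = ⟨E s + z⟩`. Since `E` maps `M ℤ^d` into itself, `⟨s⟩ ↦ ⟨E s + z⟩` is well defined, and
the translations compose as `z_{E₁ E₂} = E₁ z₂ + z₁`, which gives the action law. -/

section

variable {d : ℕ}

lemma intc_injective : Function.Injective (intc (d := d)) :=
  fun _ _ h => Int.cast_injective.comp_left h

lemma intc_add (a b : Fin d → ℤ) : intc (a + b) = intc a + intc b := by
  funext i
  simp [intc]

lemma intc_mulVec (A : Matrix (Fin d) (Fin d) ℤ) (v : Fin d → ℤ) :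
    intc (A *ᵥ v) = matR A *ᵥ intc v :=
  funext fun i => RingHom.map_mulVec (Int.castRingHom ℝ) A v i

lemma matR_mul (A B : Matrix (Fin d) (Fin d) ℤ) : matR (A * B) = matR A * matR B :=
  Matrix.map_mul (f := Int.castRingHom ℝ)

lemma sub_mul_mulVec {n R : Type*} [Fintype n] [Ring R] (A B : Matrix n n R) (v : n → R) :
    v - (A * B) *ᵥ v = A *ᵥ (v - B *ᵥ v) + (v - A *ᵥ v) := by
  rw [← mulVec_mulVec, mulVec_sub]
  abel

lemma mul_eq_mul_of_matR_conj {M E E' : Matrix (Fin d) (Fin d) ℤ} (hdet : (matR M).det ≠ 0)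
    (h : (matR M)⁻¹ * matR E * matR M = matR E') : E * M = M * E' := by
  apply Matrix.map_injective (f := (Int.cast : ℤ → ℝ)) Int.cast_injective
  change matR (E * M) = matR (M * E')
  rw [matR_mul, matR_mul, ← h, ← mul_assoc, ← mul_assoc,
    mul_nonsing_inv _ (isUnit_iff_ne_zero.mpr hdet), one_mul]

lemma coset_mulVec_add (M : Matrix (Fin d) (Fin d) ℤ) (β s : Fin d → ℤ) :
    coset M (M *ᵥ β + s) = coset M s := by
  ext x
  constructor
  · rintro ⟨γ, rfl⟩
    exact ⟨γ + β, by rw [mulVec_add, add_assoc]⟩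
  · rintro ⟨γ, rfl⟩
    exact ⟨γ - β, by rw [mulVec_sub]; congr 1; abel⟩

lemma coset_eq_coset_iff {M : Matrix (Fin d) (Fin d) ℤ} {s s' : Fin d → ℤ} :
    coset M s = coset M s' ↔ ∃ β, s = M *ᵥ β + s' := by
  refine ⟨fun h => ?_, fun ⟨β, hβ⟩ => hβ ▸ coset_mulVec_add M β s'⟩
  have hs : intc s ∈ coset M s' := h ▸ ⟨0, by simp⟩
  obtain ⟨β, hβ⟩ := hs
  exact ⟨β, intc_injective hβ⟩

lemma coset_mulVec_add_congr {M E E' : Matrix (Fin d) (Fin d) ℤ} (hME : E * M = M * E')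
    (z : Fin d → ℤ) {s s' : Fin d → ℤ} (h : coset M s = coset M s') :
    coset M (E *ᵥ s + z) = coset M (E *ᵥ s' + z) := by
  obtain ⟨β, rfl⟩ := coset_eq_coset_iff.mp h
  rw [mulVec_add, mulVec_mulVec, hME, ← mulVec_mulVec, add_assoc,
    coset_mulVec_add]

/-- `E (M β + s) + c - E c = M (E' β) + (E s + z)`, and `β ↦ E' β` is onto since `E'` is
invertible over `ℤ`. -/
lemma actC_eq_coset {M E E' B : Matrix (Fin d) (Fin d) ℤ} {c : Fin d → ℝ} {z : Fin d → ℤ}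
    (hME : E * M = M * E') (hB : E' * B = 1) (hz : c - matR E *ᵥ c = intc z)
    (s : Fin d → ℤ) : actC M E c s = coset M (E *ᵥ s + z) := by
  have key : ∀ β, matR E *ᵥ intc (M *ᵥ β + s) + c - matR E *ᵥ c
      = intc (M *ᵥ (E' *ᵥ β) + (E *ᵥ s + z)) := fun β => by
    rw [add_sub_assoc, hz, ← intc_mulVec, ← intc_add, mulVec_add, mulVec_mulVec,
      hME, ← mulVec_mulVec, add_assoc]
  ext x
  constructor
  · rintro ⟨β, rfl⟩
    exact ⟨E' *ᵥ β, key β⟩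
  · rintro ⟨β, rfl⟩
    refine ⟨B *ᵥ β, ?_⟩
    rw [key, mulVec_mulVec β E' B, hB, one_mulVec]

end

theorem coset_group_action_general {d : ℕ}
    (H : Finset (Matrix (Fin d) (Fin d) ℤ))
    (hmul : ∀ A ∈ H, ∀ B ∈ H, A * B ∈ H)
    (hinv : ∀ A ∈ H, ∃ B ∈ H, A * B = 1)
    (M : Matrix (Fin d) (Fin d) ℤ) (hdet : (matR M).det ≠ 0)
    (happr : ∀ E ∈ H, ∃ E' ∈ H, (matR M)⁻¹ * matR E * matR M = matR E')
    (c : Fin d → ℝ)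
    (hc : ∀ E ∈ H, ∃ z : Fin d → ℤ, c - (matR E).mulVec c = intc z) :
    -- E⟨s⟩ is again a coset
    (∀ E ∈ H, ∀ s : Fin d → ℤ, ∃ q : Fin d → ℤ, actC M E c s = coset M q) ∧
    -- the action only depends on the coset ⟨s⟩, not on the representative s
    (∀ E ∈ H, ∀ s s' : Fin d → ℤ, coset M s = coset M s' →
      actC M E c s = actC M E c s') ∧
    -- the identity acts trivially
    (∀ s : Fin d → ℤ, actC M 1 c s = coset M s) ∧
    -- compatibility: (E₁E₂)⟨s⟩ = E₁(E₂⟨s⟩)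
    (∀ E₁ ∈ H, ∀ E₂ ∈ H, ∀ s q : Fin d → ℤ,
      actC M E₂ c s = coset M q → actC M (E₁ * E₂) c s = actC M E₁ c q) := by
  have hact : ∀ E ∈ H, ∃ (E' : Matrix (Fin d) (Fin d) ℤ) (z : Fin d → ℤ), E * M = M * E' ∧
      c - matR E *ᵥ c = intc z ∧ ∀ s, actC M E c s = coset M (E *ᵥ s + z) := by
    intro E hE
    obtain ⟨E', hE', hconj⟩ := happr E hE
    obtain ⟨B, -, hB⟩ := hinv E' hE'
    obtain ⟨z, hz⟩ := hc E hE
    have hME := mul_eq_mul_of_matR_conj hdet hconj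
    exact ⟨E', z, hME, hz, actC_eq_coset hME hB hz⟩
  refine ⟨fun E hE s => ?_, fun E hE s s' hs => ?_, fun s => ?_,
    fun E₁ hE₁ E₂ hE₂ s q h => ?_⟩
  · obtain ⟨_, z, -, -, hEs⟩ := hact E hE
    exact ⟨_, hEs s⟩
  · obtain ⟨_, z, hME, -, hEs⟩ := hact E hE
    rw [hEs, hEs]
    exact coset_mulVec_add_congr hME z hs
  · simpa using actC_eq_coset (M := M) (E := 1) (E' := 1) (B := 1) (c := c) (z := 0)
      (by simp) (one_mul 1) (by ext; simp [matR, intc]) s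
  · obtain ⟨_, z₁, hME₁, hz₁, hE₁s⟩ := hact E₁ hE₁
    obtain ⟨_, z₂, -, hz₂, hE₂s⟩ := hact E₂ hE₂
    obtain ⟨_, z, -, hz, hE₁₂s⟩ := hact _ (hmul E₁ hE₁ E₂ hE₂)
    have hz_eq : z = E₁ *ᵥ z₂ + z₁ := intc_injective <| by
      rw [← hz, intc_add, intc_mulVec, ← hz₁, ← hz₂, matR_mul, sub_mul_mulVec]
    rw [hE₁₂s, hE₁s, hz_eq, ← mulVec_mulVec, ← add_assoc, ← mulVec_add]
    exact coset_mulVec_add_congr hME₁ z₁ (by rw [← hE₂s, h])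

/-- `(E, ⟨s⟩) ↦ E⟨s⟩` is a well-defined group action of `H`
on the set of cosets of `Mℤ^d` in `ℤ^d`; in particular `E⟨s⟩` is again a coset. -/
theorem coset_group_action {d : ℕ}
    (H : Finset (Matrix (Fin d) (Fin d) ℤ))
    (hmul : ∀ A ∈ H, ∀ B ∈ H, A * B ∈ H)
    (hone : (1 : Matrix (Fin d) (Fin d) ℤ) ∈ H)
    (hinv : ∀ A ∈ H, ∃ B ∈ H, A * B = 1)
    (huni : ∀ A ∈ H, A.det = 1 ∨ A.det = -1)
    (M : Matrix (Fin d) (Fin d) ℤ) (hdet : (matR M).det ≠ 0)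
    (happr : ∀ E ∈ H, ∃ E' ∈ H, (matR M)⁻¹ * matR E * matR M = matR E')
    (c : Fin d → ℝ)
    (hc : ∀ E ∈ H, ∃ z : Fin d → ℤ, c - (matR E).mulVec c = intc z) :
    -- E⟨s⟩ is again a coset
    (∀ E ∈ H, ∀ s : Fin d → ℤ, ∃ q : Fin d → ℤ, actC M E c s = coset M q) ∧
    -- the action only depends on the coset ⟨s⟩, not on the representative s
    (∀ E ∈ H, ∀ s s' : Fin d → ℤ, coset M s = coset M s' →
      actC M E c s = actC M E c s') ∧
    -- the identity acts trivially
    (∀ s : Fin d → ℤ, actC M 1 c s = coset M s) ∧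
    -- compatibility: (E₁E₂)⟨s⟩ = E₁(E₂⟨s⟩)
    (∀ E₁ ∈ H, ∀ E₂ ∈ H, ∀ s q : Fin d → ℤ,
      actC M E₂ c s = coset M q → actC M (E₁ * E₂) c s = actC M E₁ c q) :=
  coset_group_action_general H hmul hinv M hdet happr c hc
end

section
/- Let P, P̃ be 1×m rows of trigonometric polynomials and U, Ũ be m×m matrices of trigonometric polynomials with U Ũ* = I_m. Define N = [[P, 1 − P P̃*],[U, −U P̃*]] and Ñ = [[P̃, 1],[Ũ − Ũ P* P̃, −Ũ P*]]. Then N Ñ* = I_{m+1}. -/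
open Matrix BigOperators

abbrev TrigRing (d : ℕ) := (Fin d → ℝ) → ℂ

noncomputable def e2pi (x : ℝ) : ℂ := Complex.exp (2 * Real.pi * Complex.I * x)

def dotv {d : ℕ} (x y : Fin d → ℝ) : ℝ := ∑ i, x i * y i

def IsTrigPoly {d : ℕ} (f : TrigRing d) : Prop :=
  ∃ h : (Fin d → ℤ) →₀ ℂ, ∀ ξ, f ξ = ∑ k ∈ h.support, h k * e2pi (dotv (intc k) ξ)

/-! Multiplying out the blocks of `N Ñ*`, the two blocks of the first row telescope to `1` and `0`,
the lower-left block is `U P̃* - U P̃*`, and in the lower-right block the terms `± U P̃* P Ũ*` cancel,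
leaving `U Ũ* = 1`. -/

namespace Matrix

variable {R : Type*} [Ring R] [StarRing R] {n m k : Type*} [Fintype n] [Fintype m]
  [DecidableEq n] [DecidableEq k]

theorem fromBlocks_mul_conjTranspose_fromBlocks_eq_one
    (P Pt : Matrix n m R) (U Ut : Matrix k m R) (hUUt : U * Utᴴ = 1) :
    fromBlocks P (1 - P * Ptᴴ) U (-(U * Ptᴴ)) *
      (fromBlocks Pt 1 (Ut - Ut * Pᴴ * Pt) (-(Ut * Pᴴ)))ᴴ = 1 := by
  rw [fromBlocks_conjTranspose, fromBlocks_multiply, ← fromBlocks_one]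
  simp only [conjTranspose_sub, conjTranspose_neg, conjTranspose_mul, conjTranspose_conjTranspose,
    conjTranspose_one, Matrix.mul_sub, Matrix.sub_mul, Matrix.mul_neg, Matrix.neg_mul, Matrix.one_mul,
    Matrix.mul_one, neg_neg, Matrix.mul_assoc]
  congr 1
  · abel
  · abel
  · abel
  · rw [sub_add_cancel, hUUt]

end Matrix

theorem general_matrix_extension_general {d m : ℕ}
    (P Pt : Matrix (Fin 1) (Fin m) (TrigRing d))
    (U Ut : Matrix (Fin m) (Fin m) (TrigRing d))
    (hUUt : U * Utᴴ = 1) :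
    (Matrix.fromBlocks P (1 - P * Ptᴴ) U (-(U * Ptᴴ))) *
      (Matrix.fromBlocks Pt (1 : Matrix (Fin 1) (Fin 1) (TrigRing d))
        (Ut - Ut * Pᴴ * Pt) (-(Ut * Pᴴ)))ᴴ
      = 1 := by
  exact fromBlocks_mul_conjTranspose_fromBlocks_eq_one P Pt U Ut hUUt

/-- general matrix extension with `U Ũ* = I_m`:
`N = [[P, 1 − PP̃*],[U, −UP̃*]]`, `Ñ = [[P̃, 1],[Ũ − ŨP*P̃, −ŨP*]]` satisfy
`N Ñ* = I_{m+1}`. -/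
theorem general_matrix_extension {d m : ℕ}
    (P Pt : Matrix (Fin 1) (Fin m) (TrigRing d))
    (U Ut : Matrix (Fin m) (Fin m) (TrigRing d))
    (hP : ∀ i j, IsTrigPoly (P i j)) (hPt : ∀ i j, IsTrigPoly (Pt i j))
    (hU : ∀ i j, IsTrigPoly (U i j)) (hUt : ∀ i j, IsTrigPoly (Ut i j))
    (hUUt : U * Utᴴ = 1) :
    (Matrix.fromBlocks P (1 - P * Ptᴴ) U (-(U * Ptᴴ))) *
      (Matrix.fromBlocks Pt (1 : Matrix (Fin 1) (Fin 1) (TrigRing d))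
        (Ut - Ut * Pᴴ * Pt) (-(Ut * Pᴴ)))ᴴ
      = 1 :=
  general_matrix_extension_general P Pt U Ut hUUt
end
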